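/- arXiv:2001.11220 — 4 statements merged into one kernel-verified Lean document; each statement's English description precedes it below -/
import Mathlib

section
/- Let A be an invertible m×m real matrix, k > 0 a real number, and w, h₀, h₁ ∈ ℝᵐ. Suppose W : ℝ → ℝᵐ is differentiable, W(0) = w, and W′(t) = −A·W(t) + h₀ + (t/k)·(h₁ − h₀) for all t ∈ [0, k]. Then W(k) = exp(−kA)·w + A⁻¹(I − exp(−kA))·h₀ + k⁻¹·A⁻²(kA − I + exp(−kA))·(h₁ − h₀). -/
open Matrix

set_option maxHeartbeats 1000000

attribute [local instance] Matrix.linftyOpSemiNormedRing Matrix.linftyOpNormedRing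
  Matrix.linftyOpNormedAlgebra

section Aux

variable {m : ℕ}

/-- `mulVec` as a continuous linear map in the matrix argument. -/
noncomputable def mulVecCLM (m : ℕ) :
    Matrix (Fin m) (Fin m) ℝ →L[ℝ] ((Fin m → ℝ) →L[ℝ] (Fin m → ℝ)) :=
  LinearMap.toContinuousLinearMap
  { toFun := fun M => LinearMap.toContinuousLinearMap (Matrix.mulVecLin M)
    map_add' := by
      intro x y; ext v i
      simp [Matrix.add_mulVec]
    map_smul' := by
      intro c x; ext v i
      simp [Matrix.smul_mulVec] }

lemma mulVecCLM_apply (M : Matrix (Fin m) (Fin m) ℝ) (v : Fin m → ℝ) :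
    mulVecCLM m M v = M.mulVec v := rfl

lemma HasDerivAt.mulVec' {M : ℝ → Matrix (Fin m) (Fin m) ℝ} {M' : Matrix (Fin m) (Fin m) ℝ}
    {v : ℝ → Fin m → ℝ} {v' : Fin m → ℝ} {t : ℝ}
    (hM : HasDerivAt M M' t) (hv : HasDerivAt v v' t) :
    HasDerivAt (fun s => (M s).mulVec (v s)) (M'.mulVec (v t) + (M t).mulVec v') t := by
  have h1 : HasDerivAt (fun s => mulVecCLM m (M s)) (mulVecCLM m M') t :=
    (mulVecCLM m).hasFDerivAt.comp_hasDerivAt t hM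
  simpa [mulVecCLM_apply] using h1.clm_apply hv

end Aux

/-- For an invertible `m×m` real matrix `A`, `k > 0`, and vectors
`w, h₀, h₁ ∈ ℝᵐ`, if `W : ℝ → ℝᵐ` is differentiable with `W(0) = w` and
`W′(t) = −A·W(t) + h₀ + (t/k)·(h₁ − h₀)` on `[0, k]`, then
`W(k) = exp(−kA)·w + A⁻¹(I − exp(−kA))·h₀ + k⁻¹·A⁻²(kA − I + exp(−kA))·(h₁ − h₀)`. -/
theorem stmt7 (m : ℕ) (A : Matrix (Fin m) (Fin m) ℝ) (hA : IsUnit A.det)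
    (k : ℝ) (hk : 0 < k) (w h₀ h₁ : Fin m → ℝ)
    (W : ℝ → (Fin m → ℝ)) (hW0 : W 0 = w)
    (hode : ∀ t ∈ Set.Icc (0:ℝ) k,
      HasDerivAt W (-(A.mulVec (W t)) + h₀ + (t / k) • (h₁ - h₀)) t) :
    W k = (NormedSpace.exp ((-k) • A)).mulVec w
      + (A⁻¹ * (1 - NormedSpace.exp ((-k) • A))).mulVec h₀
      + (k⁻¹ • ((A⁻¹ * A⁻¹) * (k • A - 1 + NormedSpace.exp ((-k) • A)))).mulVec
          (h₁ - h₀) := by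
  have hinv1 : A * A⁻¹ = 1 := Matrix.mul_nonsing_inv A hA
  have hinv2 : A⁻¹ * A = 1 := Matrix.nonsing_inv_mul A hA
  set E : ℝ → Matrix (Fin m) (Fin m) ℝ := fun t => NormedSpace.exp (t • (-A)) with hE
  -- the candidate exact solution
  set Y : ℝ → (Fin m → ℝ) := fun t =>
    (E t).mulVec w + (A⁻¹ * (1 - E t)).mulVec h₀
      + (k⁻¹ • ((A⁻¹ * A⁻¹) * (t • A - 1 + E t))).mulVec (h₁ - h₀) with hYdef
  have hEderiv : ∀ t : ℝ, HasDerivAt E (-A * E t) t := fun t =>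
    hasDerivAt_exp_smul_const' (-A) t
  have hY : ∀ t : ℝ, HasDerivAt Y (-(A.mulVec (Y t)) + h₀ + (t / k) • (h₁ - h₀)) t := by
    intro t
    have h1 : HasDerivAt (fun s => (E s).mulVec w) ((-A * E t).mulVec w) t := by
      simpa using (hEderiv t).mulVec' (hasDerivAt_const t w)
    have h2 : HasDerivAt (fun s => (A⁻¹ * (1 - E s)).mulVec h₀)
        ((A⁻¹ * (A * E t)).mulVec h₀) t := by
      have hm : HasDerivAt (fun s => A⁻¹ * (1 - E s)) (A⁻¹ * (A * E t)) t := by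
        have := ((hasDerivAt_const t (1 : Matrix (Fin m) (Fin m) ℝ)).sub (hEderiv t)).const_mul A⁻¹
        simp only [neg_mul, sub_neg_eq_add, zero_add, mul_neg, neg_neg] at this
        exact this
      simpa using hm.mulVec' (hasDerivAt_const t (h₀ : Fin m → ℝ))
    have h3 : HasDerivAt (fun s => (k⁻¹ • ((A⁻¹ * A⁻¹) * (s • A - 1 + E s))).mulVec (h₁ - h₀))
        ((k⁻¹ • ((A⁻¹ * A⁻¹) * (A - A * E t))).mulVec (h₁ - h₀)) t := by
      have hsA : HasDerivAt (fun s : ℝ => s • A) A t := by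
        have := (hasDerivAt_id t).smul_const A
        simp only [id, one_smul] at this
        exact this
      have hm : HasDerivAt (fun s => k⁻¹ • ((A⁻¹ * A⁻¹) * (s • A - 1 + E s)))
          (k⁻¹ • ((A⁻¹ * A⁻¹) * (A - A * E t))) t := by
        have := (((hsA.sub (hasDerivAt_const t (1 : Matrix (Fin m) (Fin m) ℝ))).add
          (hEderiv t)).const_mul (A⁻¹ * A⁻¹)).const_smul k⁻¹
        simp only [neg_mul, sub_eq_add_neg, zero_add, neg_zero, add_zero] at this
        exact this
      simpa using hm.mulVec' (hasDerivAt_const t (h₁ - h₀ : Fin m → ℝ))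
    have hsum := (h1.add h2).add h3
    -- matrix-algebra identities for the three coefficients
    have c2 : A⁻¹ * (A * E t) = -(A * (A⁻¹ * (1 - E t))) + 1 := by
      rw [← mul_assoc, ← mul_assoc, hinv1, hinv2]
      noncomm_ring
    have c3 : -(A * (k⁻¹ • ((A⁻¹ * A⁻¹) * (t • A - 1 + E t)))) + (t / k) • 1
        = k⁻¹ • ((A⁻¹ * A⁻¹) * (A - A * E t)) := by
      have e1 : A * (A⁻¹ * A⁻¹) = A⁻¹ := by rw [← mul_assoc, hinv1, one_mul]
      have e2 : (A⁻¹ * A⁻¹) * (A - A * E t) = A⁻¹ - A⁻¹ * E t := by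
        rw [mul_sub, mul_assoc A⁻¹ A⁻¹ A, hinv2, mul_one,
          show A⁻¹ * A⁻¹ * (A * E t) = A⁻¹ * ((A⁻¹ * A) * E t) by noncomm_ring,
          hinv2, one_mul]
      rw [e2, mul_smul_comm, ← mul_assoc, e1, mul_add, mul_sub, mul_one,
        show A⁻¹ * (t • A) = t • (A⁻¹ * A) from mul_smul_comm t A⁻¹ A, hinv2,
        show (t / k) = k⁻¹ * t from by rw [div_eq_inv_mul], ← smul_smul,
        ← smul_neg, ← smul_add]
      congr 1
      abel
    have hkey : (-A * E t) *ᵥ w + (A⁻¹ * (A * E t)) *ᵥ h₀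
        + (k⁻¹ • (A⁻¹ * A⁻¹ * (A - A * E t))) *ᵥ (h₁ - h₀)
        = -(A *ᵥ Y t) + h₀ + (t / k) • (h₁ - h₀) := by
      rw [show (-A * E t) = -(A * E t) from neg_mul A (E t), c2, ← c3]
      simp only [hYdef, Matrix.mulVec_add, Matrix.mulVec_mulVec, Matrix.add_mulVec,
        Matrix.neg_mulVec, Matrix.one_mulVec, Matrix.smul_mulVec, Matrix.mulVec_smul,
        mul_smul_comm, neg_add]
      abel
    rw [← hkey]
    exact hsum
  -- uniqueness via the integrating factor `exp (t • A)`
  set F : ℝ → Matrix (Fin m) (Fin m) ℝ := fun t => NormedSpace.exp (t • A) with hF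
  have hFderiv : ∀ t : ℝ, HasDerivAt F (A * F t) t := fun t =>
    hasDerivAt_exp_smul_const' A t
  set g : ℝ → (Fin m → ℝ) := fun t => (F t).mulVec (W t - Y t) with hg
  have hgderiv : ∀ t ∈ Set.Icc (0:ℝ) k, HasDerivAt g 0 t := by
    intro t ht
    have hD : HasDerivAt (fun s => W s - Y s) (-(A.mulVec (W t - Y t))) t := by
      have h := (hode t ht).sub (hY t)
      have e : (-(A *ᵥ W t) + h₀ + (t / k) • (h₁ - h₀))
          - (-(A *ᵥ Y t) + h₀ + (t / k) • (h₁ - h₀)) = -(A *ᵥ (W t - Y t)) := by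
        rw [Matrix.mulVec_sub]
        abel
      rwa [e] at h
    have h := (hFderiv t).mulVec' hD
    have hcomm : F t * A = A * F t := by
      have : Commute A (F t) := ((Commute.refl A).smul_right t).exp_right
      exact this.symm
    have hzero : (A * F t) *ᵥ (W t - Y t) + (F t) *ᵥ (-(A *ᵥ (W t - Y t))) = 0 := by
      rw [Matrix.mulVec_neg, Matrix.mulVec_mulVec, hcomm]
      abel
    rwa [hzero] at h
  have hg0 : g 0 = 0 := by
    simp [hg, hF, hYdef, hE, hW0, NormedSpace.exp_zero]
  have hgk : g k = 0 := by
    have hcont : ContinuousOn g (Set.Icc 0 k) := fun t ht =>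
      (hgderiv t ht).continuousAt.continuousWithinAt
    have := constant_of_has_deriv_right_zero hcont
      (fun t ht => ((hgderiv t (Set.mem_Icc_of_Ico ht)).hasDerivWithinAt))
      k (Set.right_mem_Icc.2 hk.le)
    rw [this, hg0]
  -- invert the integrating factor
  have hWY : W k = Y k := by
    have h1 : (NormedSpace.exp (k • (-A)) * F k).mulVec (W k - Y k) = 0 := by
      rw [← Matrix.mulVec_mulVec]
      show (NormedSpace.exp (k • (-A))).mulVec (g k) = 0
      rw [hgk, Matrix.mulVec_zero]
    have h2 : NormedSpace.exp (k • (-A)) * F k = 1 := by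
      rw [hF, ← Matrix.exp_add_of_commute]
      · rw [show k • (-A) + k • A = 0 by rw [smul_neg]; abel, NormedSpace.exp_zero]
      · exact ((Commute.refl A).neg_left.smul_left k).smul_right k
    rw [h2, Matrix.one_mulVec, sub_eq_zero] at h1
    exact h1
  rw [hWY, hYdef]
  simp only [hE]
  rw [show k • (-A) = (-k) • A by rw [smul_neg, neg_smul]]
end

section
/- Let A be an invertible m×m real matrix and k a nonzero real number such that I + (k/3)A and I + (k/4)A are invertible, and define the real-distinct-poles rational approximation R_RDP(kA) = (I − (5k/12)A)·[(I + (k/3)A)(I + (k/4)A)]⁻¹. Then k⁻¹·A⁻²(kA − I + R_RDP(kA)) = (k/2)·(I + (k/6)A)·(I + (k/4)A)⁻¹·(I + (k/3)A)⁻¹, where A⁻² = (A⁻¹)². -/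
/-!
Writing `B = (I + (k/3)A)(I + (k/4)A)`, one has `kA - I + R = ((kA - I)B + I - (5k/12)A)B⁻¹`, and
the bracket is the polynomial identity `(kA - I)B + I - (5k/12)A = (k²/2)A²(I + (k/6)A)`; the
factor `A²` cancels against `A⁻²` and `k⁻¹ · k²/2 = k/2`.
-/

open Matrix

theorem sub_one_mul_rdp_denominator_add_numerator {𝕜 R : Type*} [Field 𝕜] [CharZero 𝕜]
    [Ring R] [Algebra 𝕜 R] (k : 𝕜) (a : R) :
    (k • a - 1) * ((1 + (k / 3) • a) * (1 + (k / 4) • a)) + (1 - (5 * k / 12) • a) =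
      (k ^ 2 / 2) • (a * a * (1 + (k / 6) • a)) := by
  simp only [mul_add, add_mul, sub_mul, mul_one, one_mul, smul_mul_assoc, mul_smul_comm,
    mul_assoc]
  module

theorem stmt10_general (m : ℕ) (A : Matrix (Fin m) (Fin m) ℝ) (hA : IsUnit A.det)
    (k : ℝ)
    (h3 : IsUnit (1 + (k / 3) • A).det) (h4 : IsUnit (1 + (k / 4) • A).det)
    (R : Matrix (Fin m) (Fin m) ℝ)
    (hR : R = (1 - (5 * k / 12) • A) * ((1 + (k / 3) • A) * (1 + (k / 4) • A))⁻¹) :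
    k⁻¹ • ((A⁻¹ * A⁻¹) * (k • A - 1 + R)) =
      (k / 2) • ((1 + (k / 6) • A) * (1 + (k / 4) • A)⁻¹ * (1 + (k / 3) • A)⁻¹) := by
  set B := (1 + (k / 3) • A) * (1 + (k / 4) • A)
  have hB : IsUnit B.det := by rw [det_mul]; exact h3.mul h4
  have hsum : k • A - 1 + R = (k ^ 2 / 2) • (A * A * (1 + (k / 6) • A)) * B⁻¹ := by
    rw [hR, ← sub_one_mul_rdp_denominator_add_numerator, add_mul,
      mul_nonsing_inv_cancel_right _ _ hB]
  have hscalar : k⁻¹ * (k ^ 2 / 2) = k / 2 := by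
    rw [pow_two, ← mul_div_assoc, ← mul_assoc, inv_mul_mul_self]
  have hcancel (C : Matrix (Fin m) (Fin m) ℝ) : A⁻¹ * A⁻¹ * (A * A * C) = C := by
    rw [mul_assoc, mul_assoc A, nonsing_inv_mul_cancel_left _ _ hA,
      nonsing_inv_mul_cancel_left _ _ hA]
  rw [hsum, smul_mul, mul_smul_comm, smul_smul, hscalar, ← mul_assoc, hcancel,
    Matrix.mul_inv_rev, mul_assoc]

/-- For an invertible `m×m` real matrix `A` and `k ≠ 0` with
`I + (k/3)A` and `I + (k/4)A` invertible, with
`R_RDP(kA) = (I − (5k/12)A)·[(I + (k/3)A)(I + (k/4)A)]⁻¹` one has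
`k⁻¹·A⁻²(kA − I + R_RDP(kA)) = (k/2)·(I + (k/6)A)·(I + (k/4)A)⁻¹·(I + (k/3)A)⁻¹`,
where `A⁻² = (A⁻¹)²`. -/
theorem stmt10 (m : ℕ) (A : Matrix (Fin m) (Fin m) ℝ) (hA : IsUnit A.det)
    (k : ℝ) (hk : k ≠ 0)
    (h3 : IsUnit (1 + (k / 3) • A).det) (h4 : IsUnit (1 + (k / 4) • A).det)
    (R : Matrix (Fin m) (Fin m) ℝ)
    (hR : R = (1 - (5 * k / 12) • A) * ((1 + (k / 3) • A) * (1 + (k / 4) • A))⁻¹) :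
    k⁻¹ • ((A⁻¹ * A⁻¹) * (k • A - 1 + R)) =
      (k / 2) • ((1 + (k / 6) • A) * (1 + (k / 4) • A)⁻¹ * (1 + (k / 3) • A)⁻¹) :=
  stmt10_general m A hA k h3 h4 R hR
end

section
/- Let A be an invertible m×m real matrix and k > 0 a real number such that I + (k/3)A and I + (k/4)A are invertible. Set R = (I − (5k/12)A)·[(I + (k/3)A)(I + (k/4)A)]⁻¹, S = (I + (k/4)A)⁻¹, and T = (I + (k/3)A)⁻¹. Then for all vectors w, h₀, h₁ ∈ ℝᵐ: R·w + A⁻¹(I − R)·h₀ + k⁻¹·A⁻²(kA − I + R)·(h₁ − h₀) = T·(9w + 2k·h₀ + k·h₁) − S·(8w + (3k/2)·h₀ + (k/2)·h₁), where A⁻² = (A⁻¹)². -/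
open Matrix

/-- For an invertible `m×m` real matrix `A` and `k > 0` with
`I + (k/3)A` and `I + (k/4)A` invertible, set
`R = (I − (5k/12)A)·[(I + (k/3)A)(I + (k/4)A)]⁻¹`, `S = (I + (k/4)A)⁻¹`,
`T = (I + (k/3)A)⁻¹`.  Then for all vectors `w, h₀, h₁ ∈ ℝᵐ`:
`R·w + A⁻¹(I − R)·h₀ + k⁻¹·A⁻²(kA − I + R)·(h₁ − h₀)
  = T·(9w + 2k·h₀ + k·h₁) − S·(8w + (3k/2)·h₀ + (k/2)·h₁)`, where `A⁻² = (A⁻¹)²`. -/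
theorem stmt14 (m : ℕ) (A : Matrix (Fin m) (Fin m) ℝ) (hA : IsUnit A.det)
    (k : ℝ) (hk : 0 < k)
    (h3 : IsUnit (1 + (k / 3) • A).det) (h4 : IsUnit (1 + (k / 4) • A).det)
    (R S T : Matrix (Fin m) (Fin m) ℝ)
    (hR : R = (1 - (5 * k / 12) • A) * ((1 + (k / 3) • A) * (1 + (k / 4) • A))⁻¹)
    (hS : S = (1 + (k / 4) • A)⁻¹) (hT : T = (1 + (k / 3) • A)⁻¹) :
    ∀ w h₀ h₁ : Fin m → ℝ,
      R.mulVec w + (A⁻¹ * (1 - R)).mulVec h₀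
        + (k⁻¹ • ((A⁻¹ * A⁻¹) * (k • A - 1 + R))).mulVec (h₁ - h₀) =
      T.mulVec ((9 : ℝ) • w + (2 * k) • h₀ + k • h₁)
        - S.mulVec ((8 : ℝ) • w + (3 * k / 2) • h₀ + (k / 2) • h₁) := by
  intro w h₀ h₁
  set B3 : Matrix (Fin m) (Fin m) ℝ := 1 + (k / 3) • A with hB3
  set B4 : Matrix (Fin m) (Fin m) ℝ := 1 + (k / 4) • A with hB4
  set C : Matrix (Fin m) (Fin m) ℝ := B3 * B4 with hCdef
  have hcomm : B3 * B4 = B4 * B3 := by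
    simp only [hB3, hB4, add_mul, mul_add, one_mul, mul_one, smul_smul,
      Matrix.smul_mul, Matrix.mul_smul]
    module
  have hC : IsUnit C.det := by
    rw [hCdef, Matrix.det_mul]; exact h3.mul h4
  have hA1 : A * A⁻¹ = 1 := Matrix.mul_nonsing_inv A hA
  have hA2 : A⁻¹ * A = 1 := Matrix.nonsing_inv_mul A hA
  have hC1 : C⁻¹ * C = 1 := Matrix.nonsing_inv_mul C hC
  have hC2 : C * C⁻¹ = 1 := Matrix.mul_nonsing_inv C hC
  have hB3i : B3⁻¹ * B3 = 1 := Matrix.nonsing_inv_mul B3 h3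
  have hB4i : B4⁻¹ * B4 = 1 := Matrix.nonsing_inv_mul B4 h4
  have cancelC : ∀ X Y : Matrix (Fin m) (Fin m) ℝ, X * C = Y * C → X = Y := by
    intro X Y h
    calc X = X * C * C⁻¹ := by rw [mul_assoc, hC2, mul_one]
      _ = Y * C * C⁻¹ := by rw [h]
      _ = Y := by rw [mul_assoc, hC2, mul_one]
  have cancelA : ∀ X Y : Matrix (Fin m) (Fin m) ℝ, A * X = A * Y → X = Y := by
    intro X Y h
    calc X = A⁻¹ * (A * X) := by rw [← mul_assoc, hA2, one_mul]
      _ = A⁻¹ * (A * Y) := by rw [h]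
      _ = Y := by rw [← mul_assoc, hA2, one_mul]
  have hRC : R * C = 1 - (5 * k / 12) • A := by
    rw [hR, mul_assoc, hC1, mul_one]
  have hTC : T * C = B4 := by
    rw [hT, hCdef, ← mul_assoc, hB3i, one_mul]
  have hSC : S * C = B3 := by
    rw [hS, hCdef, hcomm, ← mul_assoc, hB4i, one_mul]
  have eq1 : R = (9 : ℝ) • T - (8 : ℝ) • S := by
    apply cancelC
    rw [sub_mul, Matrix.smul_mul, Matrix.smul_mul, hRC, hTC, hSC, hB3, hB4]
    module
  have eq2 : A⁻¹ * (1 - R) = (3 * k) • T - (2 * k) • S := by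
    apply cancelA
    rw [← mul_assoc, hA1, one_mul]
    apply cancelC
    simp only [sub_mul, one_mul, mul_sub, Matrix.mul_smul, Matrix.smul_mul,
      mul_assoc, hRC, hTC, hSC]
    rw [hCdef, hB3, hB4]
    simp only [add_mul, mul_add, one_mul, mul_one, smul_smul,
      Matrix.smul_mul, Matrix.mul_smul, smul_add]
    module
  have eq3 : k⁻¹ • ((A⁻¹ * A⁻¹) * (k • A - 1 + R)) = k • T - (k / 2) • S := by
    rw [inv_smul_eq_iff₀ hk.ne']
    apply cancelA
    apply cancelA
    have hL : A * (A * (A⁻¹ * A⁻¹ * (k • A - 1 + R))) = k • A - 1 + R := by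
      rw [show A * (A⁻¹ * A⁻¹ * (k • A - 1 + R)) = A⁻¹ * (k • A - 1 + R) from by
        rw [← mul_assoc, ← mul_assoc, hA1, one_mul], ← mul_assoc, hA1, one_mul]
    rw [hL]
    apply cancelC
    simp only [add_mul, sub_mul, one_mul, mul_sub, Matrix.mul_smul, Matrix.smul_mul,
      mul_assoc, hRC, hTC, hSC]
    rw [hCdef, hB3, hB4]
    simp only [add_mul, mul_add, one_mul, mul_one, smul_smul,
      Matrix.smul_mul, Matrix.mul_smul, smul_add, smul_sub, sub_mul, mul_sub]
    module
  rw [eq2, eq3, eq1]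
  simp only [Matrix.sub_mulVec, Matrix.smul_mulVec, Matrix.mulVec_add,
    Matrix.mulVec_sub, Matrix.mulVec_smul]
  module
end

section
/- Define the rational function r : ℂ → ℂ by r(z) = (1 − 5z/12) / ((1 + z/3)(1 + z/4)). Then r is a second-order approximation of e^{−z} at 0: there exist constants C > 0 and δ > 0 such that for all complex z with |z| ≤ δ (and 1 + z/3 ≠ 0, 1 + z/4 ≠ 0), |exp(−z) − r(z)| ≤ C·|z|³. -/
/-- The real-distinct-poles rational function
`r(z) = (1 − 5z/12) / ((1 + z/3)(1 + z/4))` is a second-order approximation of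
`e^{−z}` at `0`: there are `C > 0` and `δ > 0` with
`|exp(−z) − r(z)| ≤ C·|z|³` for all `z` with `|z| ≤ δ`, `1 + z/3 ≠ 0`, `1 + z/4 ≠ 0`. -/
theorem stmt15 :
    ∃ C > (0 : ℝ), ∃ δ > (0 : ℝ), ∀ z : ℂ, ‖z‖ ≤ δ →
      1 + z / 3 ≠ 0 → 1 + z / 4 ≠ 0 →
      ‖Complex.exp (-z) - (1 - 5 * z / 12) / ((1 + z / 3) * (1 + z / 4))‖ ≤
        C * ‖z‖ ^ 3 := by
  refine ⟨1, one_pos, 1, one_pos, ?_⟩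
  intro z hz h3 h4
  -- algebraic identity (no exp involved)
  have key' : (1 - z + z ^ 2 / 2 : ℂ) - (1 - 5 * z / 12) / ((1 + z / 3) * (1 + z / 4))
      = z ^ 3 * (5 + z) / (24 * ((1 + z / 3) * (1 + z / 4))) := by
    have hD : ((1 + z / 3) * (1 + z / 4)) ≠ 0 := mul_ne_zero h3 h4
    have h24D : (24 : ℂ) * ((1 + z / 3) * (1 + z / 4)) ≠ 0 := by
      exact mul_ne_zero (by norm_num) hD
    rw [eq_div_iff h24D, sub_mul]
    have hc : (1 - 5 * z / 12) / ((1 + z / 3) * (1 + z / 4))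
        * (24 * ((1 + z / 3) * (1 + z / 4))) = (1 - 5 * z / 12) * 24 := by
      rw [mul_comm (24 : ℂ) _, ← mul_assoc, div_mul_cancel₀ _ hD]
    rw [hc]
    ring
  have key : Complex.exp (-z) - (1 - 5 * z / 12) / ((1 + z / 3) * (1 + z / 4))
      = (Complex.exp (-z) - (1 - z + z ^ 2 / 2))
        + z ^ 3 * (5 + z) / (24 * ((1 + z / 3) * (1 + z / 4))) := by
    rw [← key']; ring
  rw [key]
  -- Taylor bound for exp(-z)
  have hz' : ‖-z‖ ≤ 1 := by simpa using hz
  have hb := Complex.exp_bound hz' (n := 3) (by norm_num)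
  have hsum : (∑ m ∈ Finset.range 3, (-z) ^ m / (Nat.factorial m)) = 1 - z + z ^ 2 / 2 := by
    simp [Finset.sum_range_succ, Nat.factorial]
    ring
  rw [hsum] at hb
  have habsneg : ‖-z‖ = ‖z‖ := by simp
  rw [habsneg] at hb
  have h1 : ‖Complex.exp (-z) - (1 - z + z ^ 2 / 2)‖
      ≤ 2 / 9 * ‖z‖ ^ 3 := by
    calc ‖Complex.exp (-z) - (1 - z + z ^ 2 / 2)‖
        ≤ ‖z‖ ^ 3 * ((3 : ℕ).succ * ((Nat.factorial 3 : ℝ) * 3)⁻¹) := hb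
      _ = 2 / 9 * ‖z‖ ^ 3 := by norm_num [Nat.factorial]; ring
  -- lower bounds on the denominator factors
  have ha3 : (2 : ℝ) / 3 ≤ ‖1 + z / 3‖ := by
    have h := norm_add_le (1 + z / 3) (-(z / 3))
    have he : (1 + z / 3) + (-(z / 3)) = 1 := by ring
    rw [he, norm_one, norm_neg] at h
    have hz3 : ‖z / 3‖ ≤ 1 / 3 := by
      rw [norm_div]
      simp only [Complex.norm_ofNat]
      linarith
    linarith
  have ha4 : (3 : ℝ) / 4 ≤ ‖1 + z / 4‖ := by
    have h := norm_add_le (1 + z / 4) (-(z / 4))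
    have he : (1 + z / 4) + (-(z / 4)) = 1 := by ring
    rw [he, norm_one, norm_neg] at h
    have hz4 : ‖z / 4‖ ≤ 1 / 4 := by
      rw [norm_div]
      simp only [Complex.norm_ofNat]
      linarith
    linarith
  have h5z : ‖5 + z‖ ≤ 6 := by
    have h := norm_add_le (5 : ℂ) z
    have h5 : ‖(5 : ℂ)‖ = 5 := by norm_num
    rw [h5] at h
    linarith
  have hden : (12 : ℝ) ≤ ‖24 * ((1 + z / 3) * (1 + z / 4))‖ := by
    rw [norm_mul, norm_mul]
    have h24 : ‖(24 : ℂ)‖ = 24 := by norm_num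
    rw [h24]
    nlinarith [norm_nonneg (1 + z / 3), norm_nonneg (1 + z / 4)]
  have h2 : ‖z ^ 3 * (5 + z) / (24 * ((1 + z / 3) * (1 + z / 4)))‖
      ≤ 1 / 2 * ‖z‖ ^ 3 := by
    rw [norm_div, norm_mul, norm_pow]
    rw [div_le_iff₀ (by linarith)]
    nlinarith [pow_nonneg (norm_nonneg z) 3, norm_nonneg (5 + z)]
  calc ‖(Complex.exp (-z) - (1 - z + z ^ 2 / 2))
        + z ^ 3 * (5 + z) / (24 * ((1 + z / 3) * (1 + z / 4)))‖
      ≤ ‖Complex.exp (-z) - (1 - z + z ^ 2 / 2)‖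
        + ‖z ^ 3 * (5 + z) / (24 * ((1 + z / 3) * (1 + z / 4)))‖ :=
        norm_add_le _ _
    _ ≤ 2 / 9 * ‖z‖ ^ 3 + 1 / 2 * ‖z‖ ^ 3 := by linarith
    _ ≤ 1 * ‖z‖ ^ 3 := by nlinarith [pow_nonneg (norm_nonneg z) 3]
end
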